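/- arXiv:2207.05731 — 3 statements merged into one kernel-verified Lean document; each statement's English description precedes it below -/
import Mathlib

section
/- Let n be a natural number and let A, B be real symmetric n×n matrices such that A is positive definite. If B² = A² and trace(B) = trace(A), then B = A. -/
/-!
By uniqueness of positive square roots, `A² = B²` forces `A = |B|`, and `|B| - B = 2 B⁻ ≥ 0`.
So `A - B` is positive semidefinite with trace zero, hence vanishes.
-/

namespace CFC

variable {A : Type*} [NonUnitalRing A] [StarRing A] [TopologicalSpace A]
  [Module ℝ A] [SMulCommClass ℝ A A] [IsScalarTower ℝ A A]
  [NonUnitalContinuousFunctionalCalculus ℝ A IsSelfAdjoint]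
  [PartialOrder A] [StarOrderedRing A] [NonnegSpectrumClass ℝ A]
  [IsTopologicalRing A] [T2Space A]

lemma eq_abs_of_mul_self_eq {a b : A} (ha : 0 ≤ a) (hb : IsSelfAdjoint b) (h : a * a = b * b) :
    a = abs b := by
  rw [abs, hb.star_eq, sqrt_unique h ha]

lemma le_of_mul_self_eq {a b : A} (ha : 0 ≤ a) (hb : IsSelfAdjoint b) (h : a * a = b * b) :
    b ≤ a := by
  rw [eq_abs_of_mul_self_eq ha hb h, ← sub_nonneg, abs_sub_self b hb]
  exact nsmul_nonneg (negPart_nonneg b) 2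

end CFC

open scoped MatrixOrder in
lemma Matrix.eq_of_le_of_trace_eq {𝕜 n : Type*} [RCLike 𝕜] [Fintype n] {A B : Matrix n n 𝕜}
    (hle : A ≤ B) (htr : A.trace = B.trace) : A = B :=
  (sub_eq_zero.mp ((PosSemidef.trace_eq_zero_iff hle).mp (by rw [trace_sub, htr, sub_self]))).symm

theorem stmt_0 (n : ℕ) (A B : Matrix (Fin n) (Fin n) ℝ)
    (hA : A.PosDef) (hB : B.IsSymm)
    (hsq : B * B = A * A) (htr : B.trace = A.trace) : B = A := by
  open scoped MatrixOrder in
  have hB' : IsSelfAdjoint B := by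
    simpa [IsSelfAdjoint, Matrix.star_eq_conjTranspose] using hB.eq
  exact Matrix.eq_of_le_of_trace_eq (CFC.le_of_mul_self_eq hA.posSemidef.nonneg hB' hsq.symm) htr
end

section
/- Let n be a natural number, let O be a real orthogonal n×n matrix and let D be a diagonal real n×n matrix with strictly positive diagonal entries. If trace(O·D) = trace(D), then O = 1 (the identity matrix). -/
/-! Each column of an orthogonal matrix `O` is a unit vector, so its squared distance to the
corresponding column of `1` is `2 (1 - O j j)`. Weighting these distances by the positive diagonal
entries of `D` and summing gives `2 (trace D - trace (O D)) = 0`, so every column of `O` is that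
of `1`. -/

open Matrix

namespace Matrix

theorem trace_mul_of_isDiag {ι R : Type*} [Fintype ι] [DecidableEq ι] [Semiring R]
    (A : Matrix ι ι R) {D : Matrix ι ι R} (hD : D.IsDiag) :
    (A * D).trace = ∑ i, A i i * D i i := by
  conv_lhs => rw [← hD.diagonal_diag]
  simp only [trace, diag_apply, mul_diagonal]

theorem sum_sq_sub_one_apply_eq_of_transpose_mul_self {ι : Type*} [Fintype ι] [DecidableEq ι]
    {O : Matrix ι ι ℝ} (hO : Oᵀ * O = 1) (j : ι) :
    ∑ i, (O i j - (1 : Matrix ι ι ℝ) i j) ^ 2 = 2 * (1 - O j j) := by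
  have hgram : (O - 1)ᵀ * (O - 1) = 1 + 1 - Oᵀ - O := by
    rw [transpose_sub, transpose_one, sub_mul, mul_sub, mul_sub, hO, one_mul, mul_one, one_mul]
    abel
  have hjj := congrFun (congrFun hgram j) j
  simp only [mul_apply, transpose_apply, Matrix.sub_apply, Matrix.add_apply, one_apply_eq] at hjj
  simp only [sq, hjj]
  ring

theorem eq_of_sum_mul_sum_sq_sub_eq_zero {m n : Type*} [Fintype m] [Fintype n]
    {A B : Matrix m n ℝ} {w : n → ℝ} (hw : ∀ j, 0 < w j)
    (h : ∑ j, w j * ∑ i, (A i j - B i j) ^ 2 = 0) : A = B := by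
  ext i j
  have hcol : w j * ∑ i, (A i j - B i j) ^ 2 = 0 :=
    (Finset.sum_eq_zero_iff_of_nonneg fun j _ => mul_nonneg (hw j).le (by positivity)).mp h j
      (Finset.mem_univ j)
  have hentry : (A i j - B i j) ^ 2 = 0 :=
    (Finset.sum_eq_zero_iff_of_nonneg fun i _ => sq_nonneg _).mp
      ((mul_eq_zero.mp hcol).resolve_left (hw j).ne') i (Finset.mem_univ i)
  exact sub_eq_zero.mp (pow_eq_zero_iff two_ne_zero |>.mp hentry)

end Matrix

theorem stmt_3 (n : ℕ) (O D : Matrix (Fin n) (Fin n) ℝ)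
    (hO : Oᵀ * O = 1) (hD : ∀ i j, i ≠ j → D i j = 0)
    (hpos : ∀ i, 0 < D i i) (htr : (O * D).trace = D.trace) : O = 1 := by
  refine eq_of_sum_mul_sum_sq_sub_eq_zero hpos ?_
  calc ∑ j, D j j * ∑ i, (O i j - (1 : Matrix (Fin n) (Fin n) ℝ) i j) ^ 2
      = 2 * (D.trace - (O * D).trace) := by
        rw [trace_mul_of_isDiag O fun i j hij => hD i j hij]
        simp only [sum_sq_sub_one_apply_eq_of_transpose_mul_self hO, trace, diag_apply,
          Finset.mul_sum, ← Finset.sum_sub_distrib]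
        exact Finset.sum_congr rfl fun j _ => by ring
    _ = 0 := by rw [htr, sub_self, mul_zero]
end

section
/- Let E = EuclideanSpace ℝ (Fin n) and let K ⊆ E be a nonempty compact convex set. Let h : E → E be a map such that h maps K into K, h is 1-Lipschitz on K (i.e. dist(h a, h b) ≤ dist(a, b) for all a, b ∈ K), and h y = y for every y in the frontier of K. Then h z = z for every z ∈ K. -/
/-!
Every point `z` of a bounded set `K` lies on a chord `[x, y]` with both ends on the frontier:
move from `z` in the directions `v` and `-v` until leaving `K`. If `h` fixes `x` and `y` and
does not increase distances, then `h z` is at distance at most `dist x z` from `x` and at most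
`dist z y` from `y`; since these add up to `dist x y`, strict convexity of the Euclidean norm
forces `h z = z`.
-/

open Bornology Metric Set

theorem IsPreconnected.inter_frontier_nonempty {X : Type*} [TopologicalSpace X] {s t : Set X}
    (hs : IsPreconnected s) (hst : (s ∩ t).Nonempty) (hst' : (s \ t).Nonempty) :
    (s ∩ frontier t).Nonempty := by
  by_contra hfr
  have hcover : s ⊆ interior t ∪ (closure t)ᶜ := fun x hx => by
    by_contra hx'
    rw [mem_union, mem_compl_iff, not_or, not_not] at hx'
    exact hfr ⟨x, hx, hx'.2, hx'.1⟩
  rcases hs.subset_or_subset isOpen_interior isClosed_closure.isOpen_compl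
      (disjoint_compl_right.mono_left interior_subset_closure) hcover with hint | hext
  · obtain ⟨x, hxs, hxt⟩ := hst'
    exact hxt (interior_subset (hint hxs))
  · obtain ⟨x, hxs, hxt⟩ := hst
    exact hext hxs (subset_closure hxt)

section NormedSpace

variable {E : Type*} [NormedAddCommGroup E] [NormedSpace ℝ E]

theorem Bornology.IsBounded.exists_add_smul_mem_frontier {K : Set E} (hK : IsBounded K)
    {z : E} (hz : z ∈ K) {v : E} (hv : v ≠ 0) : ∃ t : ℝ, 0 ≤ t ∧ z + t • v ∈ frontier K := by
  obtain ⟨C, hC⟩ := hK.subset_closedBall z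
  set T := (|C| + 1) / ‖v‖
  have hT : 0 ≤ T := by positivity
  have hout : z + T • v ∉ K := fun hmem => by
    have hle := hC hmem
    rw [mem_closedBall, dist_self_add_left, norm_smul, Real.norm_of_nonneg hT,
      div_mul_cancel₀ _ (norm_ne_zero_iff.mpr hv)] at hle
    linarith [le_abs_self C]
  have hray : IsPreconnected ((fun t : ℝ => z + t • v) '' Icc 0 T) :=
    isPreconnected_Icc.image _ (by fun_prop)
  obtain ⟨_, ⟨t, ht, rfl⟩, hfr⟩ := hray.inter_frontier_nonempty
    ⟨z, ⟨0, ⟨le_rfl, hT⟩, by simp⟩, hz⟩ ⟨_, ⟨T, ⟨hT, le_rfl⟩, rfl⟩, hout⟩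
  exact ⟨t, ht.1, hfr⟩

theorem Bornology.IsBounded.exists_mem_frontier_dist_add_dist_eq [Nontrivial E] {K : Set E}
    (hK : IsBounded K) {z : E} (hz : z ∈ K) :
    ∃ x ∈ frontier K, ∃ y ∈ frontier K, dist x z + dist z y = dist x y := by
  obtain ⟨v, hv⟩ := exists_ne (0 : E)
  obtain ⟨s, hs, hx⟩ := hK.exists_add_smul_mem_frontier hz hv
  obtain ⟨t, ht, hy⟩ := hK.exists_add_smul_mem_frontier hz (neg_ne_zero.mpr hv)
  refine ⟨_, hx, _, hy, ?_⟩
  rw [dist_self_add_left, dist_comm, dist_self_add_left, dist_eq_norm,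
    show z + s • v - (z + t • -v) = (s + t) • v by module]
  simp only [norm_smul, norm_neg, Real.norm_of_nonneg, hs, ht, add_nonneg]
  ring

end NormedSpace

theorem eq_of_dist_le_of_dist_add_dist_eq {V P : Type*} [NormedAddCommGroup V]
    [NormedSpace ℝ V] [StrictConvexSpace ℝ V] [MetricSpace P] [NormedAddTorsor V P]
    {x y z w : P} (hz : dist x z + dist z y = dist x y) (hxw : dist x w ≤ dist x z)
    (hwy : dist w y ≤ dist z y) : w = z := by
  have hxw' : dist x w = dist x z := by linarith [dist_triangle x w y]
  have hwy' : dist w y = dist z y := by linarith [dist_triangle x w y]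
  have hcancel : dist x z / dist x y * dist x y = dist x z :=
    div_mul_cancel_of_imp fun _ => by linarith [@dist_nonneg _ _ x z, @dist_nonneg _ _ z y]
  have hline : ∀ p, dist x p = dist x z → dist p y = dist z y →
      p = AffineMap.lineMap x y (dist x z / dist x y) := fun p hxp hpy =>
    eq_lineMap_of_dist_eq_mul_of_dist_eq_mul (by rw [hxp, hcancel])
      (by rw [hpy, sub_mul, one_mul, hcancel]; linarith)
  exact (hline w hxw' hwy').trans (hline z rfl rfl).symm

theorem stmt_5_general (n : ℕ) (K : Set (EuclideanSpace ℝ (Fin n)))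
    (hK : IsCompact K)
    (h : EuclideanSpace ℝ (Fin n) → EuclideanSpace ℝ (Fin n))
    (hlip : ∀ a ∈ K, ∀ b ∈ K, dist (h a) (h b) ≤ dist a b)
    (hbd : ∀ y ∈ frontier K, h y = y) :
    ∀ z ∈ K, h z = z := by
  intro z hz
  rcases subsingleton_or_nontrivial (EuclideanSpace ℝ (Fin n)) with _ | _
  · exact Subsingleton.elim _ _
  obtain ⟨x, hx, y, hy, hxzy⟩ := hK.isBounded.exists_mem_frontier_dist_add_dist_eq hz
  have hxK := hK.isClosed.frontier_subset hx
  have hyK := hK.isClosed.frontier_subset hy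
  refine eq_of_dist_le_of_dist_add_dist_eq hxzy ?_ ?_
  · simpa only [hbd x hx] using hlip x hxK z hz
  · simpa only [hbd y hy] using hlip z hz y hyK

theorem stmt_5 (n : ℕ) (K : Set (EuclideanSpace ℝ (Fin n)))
    (hne : K.Nonempty) (hK : IsCompact K) (hconv : Convex ℝ K)
    (h : EuclideanSpace ℝ (Fin n) → EuclideanSpace ℝ (Fin n))
    (hmaps : Set.MapsTo h K K)
    (hlip : ∀ a ∈ K, ∀ b ∈ K, dist (h a) (h b) ≤ dist a b)
    (hbd : ∀ y ∈ frontier K, h y = y) :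
    ∀ z ∈ K, h z = z :=
  stmt_5_general n K hK h hlip hbd
end
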